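/- Let S be a finite poset and V an abelian category with enough injectives. Then the abelian category of diagrams S ⥤ V has enough injectives. More precisely, every diagram D : S ⥤ V admits a monomorphism into a finite direct sum ⊕_{s ∈ S} ⟨s⟩J_s, where for each s the object J_s is an injective object of V admitting a monomorphism D(s) → J_s; in particular this direct sum is an injective object of the functor category. -/

import Mathlib

/-!
The cone sheaf `⟨s⟩W` is right adjoint to evaluation at `s`: a morphism `D ⟶ ⟨s⟩W` is the same
as a morphism `D(s) ⟶ W`. Since evaluation preserves monomorphisms, `⟨s⟩J` is injective whenever
`J` is, and so is the finite biproduct `⊕ₛ ⟨s⟩Jₛ`. Choosing monomorphisms `D(s) ⟶ Jₛ`, the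
induced `D ⟶ ⊕ₛ ⟨s⟩Jₛ` is a monomorphism because its component at `t`, followed by the
projection onto `⟨t⟩Jₜ`, is the chosen `D(t) ⟶ Jₜ`.
-/

open CategoryTheory CategoryTheory.Limits ZeroObject
open scoped Classical

attribute [local instance] CategoryTheory.Limits.HasFiniteBiproducts.of_hasFiniteProducts

universe u v

variable {S : Type} [PartialOrder S] {V : Type u} [Category.{v} V] [Abelian V]

/-- The cone-shaped sheaf `⟨s⟩W` on a poset `S`: its value at `t` is `W` if `t ≤ s` and `0`
otherwise; the structure map for `t ≤ t' ≤ s` is the identity of `W`, and all other structure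
maps are zero. -/
noncomputable def coneSheaf (s : S) (W : V) : S ⥤ V where
  obj t := if t ≤ s then W else 0
  map {t t'} f :=
    if h' : t' ≤ s then
      eqToHom (by rw [if_pos (le_trans (leOfHom f) h'), if_pos h'])
    else 0
  map_id t := by
    by_cases h : t ≤ s
    · rw [dif_pos h]
      simp
    · exact ((isZero_zero V).of_iso (eqToIso (if_neg h))).eq_of_src _ _
  map_comp {t t' t''} f g := by
    by_cases h'' : t'' ≤ s
    · have h' : t' ≤ s := le_trans (leOfHom g) h''
      rw [dif_pos h'', dif_pos h'', dif_pos h', eqToHom_trans]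
    · exact ((isZero_zero V).of_iso (eqToIso (if_neg h''))).eq_of_tgt _ _

lemma coneSheaf_obj_isZero (s : S) (W : V) {t : S} (h : ¬ t ≤ s) :
    IsZero ((coneSheaf s W).obj t) :=
  (isZero_zero V).of_iso (eqToIso (if_neg h))

lemma coneSheaf_map_isIso {s : S} (W : V) {t t' : S} (φ : t ⟶ t') (h : t' ≤ s) :
    IsIso ((coneSheaf s W).map φ) := by
  dsimp only [coneSheaf]
  rw [dif_pos h]
  infer_instance

lemma coneSheaf_hom_ext {s : S} {W : V} {D : S ⥤ V} {φ ψ : D ⟶ coneSheaf s W}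
    (h : φ.app s = ψ.app s) : φ = ψ := by
  ext t
  by_cases ht : t ≤ s
  · have := coneSheaf_map_isIso W (homOfLE ht) le_rfl
    rw [← cancel_mono ((coneSheaf s W).map (homOfLE ht)), ← φ.naturality, ← ψ.naturality, h]
  · exact (coneSheaf_obj_isZero s W ht).eq_of_tgt _ _

noncomputable def coneSheafObjSelfIso (s : S) (W : V) : (coneSheaf s W).obj s ≅ W :=
  eqToIso (if_pos le_rfl)

noncomputable def coneSheafLift {s : S} {W : V} (D : S ⥤ V) (f : D.obj s ⟶ W) :
    D ⟶ coneSheaf s W where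
  app t := if h : t ≤ s then D.map (homOfLE h) ≫ f ≫ eqToHom (if_pos h).symm else 0
  naturality {t t'} φ := by
    by_cases h' : t' ≤ s
    · have h : t ≤ s := le_trans (leOfHom φ) h'
      rw [dif_pos h, dif_pos h']
      change _ = _ ≫ (coneSheaf s W).map φ
      dsimp only [coneSheaf]
      rw [dif_pos h', Category.assoc, Category.assoc, eqToHom_trans,
        ← D.map_comp_assoc]
      rfl
    · exact (coneSheaf_obj_isZero s W h').eq_of_tgt _ _

lemma coneSheafLift_app_self {s : S} {W : V} (D : S ⥤ V) (f : D.obj s ⟶ W) :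
    (coneSheafLift D f).app s = f ≫ (coneSheafObjSelfIso s W).inv := by
  simp only [coneSheafLift, homOfLE_leOfHom, Std.le_refl, ↓reduceDIte, homOfLE_refl,
    CategoryTheory.Functor.map_id, Category.id_comp, coneSheafObjSelfIso]
  rfl

instance coneSheaf_injective (s : S) (J : V) [Injective J] : Injective (coneSheaf s J) where
  factors {X Y} φ i _ := by
    obtain ⟨h, hh⟩ := Injective.factors (φ.app s ≫ (coneSheafObjSelfIso s J).hom) (i.app s)
    refine ⟨coneSheafLift Y h, coneSheaf_hom_ext ?_⟩
    rw [NatTrans.comp_app, coneSheafLift_app_self, reassoc_of% hh, Iso.hom_inv_id,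
      Category.comp_id]

lemma mono_biproduct_lift_coneSheafLift [Fintype S] {D : S ⥤ V} {J : S → V}
    (f : ∀ s, D.obj s ⟶ J s) [∀ s, Mono (f s)] :
    Mono (biproduct.lift fun s => coneSheafLift D (f s)) := by
  rw [NatTrans.mono_iff_mono_app]
  intro t
  have hπ : (biproduct.lift fun s => coneSheafLift D (f s)).app t ≫
      (biproduct.π (fun s => coneSheaf s (J s)) t).app t =
        f t ≫ (coneSheafObjSelfIso t (J t)).inv := by
    rw [← NatTrans.comp_app, biproduct.lift_π, coneSheafLift_app_self]
  have : Mono (f t ≫ (coneSheafObjSelfIso t (J t)).inv) := mono_comp _ _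
  rw [← hπ] at this
  exact mono_of_mono _ ((biproduct.π (fun s => coneSheaf s (J s)) t).app t)

theorem exists_mono_biproduct_coneSheaf [Fintype S] [EnoughInjectives V] (D : S ⥤ V) :
    ∃ (J : S → V) (f : ∀ s : S, D.obj s ⟶ J s) (g : D ⟶ ⨁ fun s : S => coneSheaf s (J s)),
      (∀ s : S, Injective (J s)) ∧ (∀ s : S, Mono (f s)) ∧ Mono g ∧
        Injective (⨁ fun s : S => coneSheaf s (J s)) :=
  ⟨fun s => Injective.under (D.obj s), fun s => Injective.ι (D.obj s), _,
    fun _ => inferInstance, fun _ => inferInstance,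
    mono_biproduct_lift_coneSheafLift fun s => Injective.ι (D.obj s), inferInstance⟩

/-- If `S` is a finite poset and `V` an abelian category with enough injectives,
then the category of diagrams `S ⥤ V` has enough injectives; more precisely, every diagram
`D` admits a monomorphism into a finite direct sum `⊕_{s ∈ S} ⟨s⟩J_s` where each `J_s` is an
injective object of `V` admitting a monomorphism `D(s) → J_s`, and this direct sum is an
injective object of the functor category. -/
theorem functorCategory_enoughInjectives [Fintype S] [EnoughInjectives V] :
    EnoughInjectives (S ⥤ V) ∧
      ∀ D : S ⥤ V,
        ∃ (J : S → V) (f : ∀ s : S, D.obj s ⟶ J s)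
          (g : D ⟶ ⨁ fun s : S => coneSheaf s (J s)),
          (∀ s : S, Injective (J s)) ∧ (∀ s : S, Mono (f s)) ∧ Mono g ∧
            Injective (⨁ fun s : S => coneSheaf s (J s)) := by
  refine ⟨⟨fun D => ?_⟩, exists_mono_biproduct_coneSheaf⟩
  obtain ⟨_, _, g, _, _, hg, hInj⟩ := exists_mono_biproduct_coneSheaf D
  exact ⟨⟨_, hInj, g, hg⟩⟩
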